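/- For any 𝐤∈ℕ[Φ]^W, a weight μ∈P is a sink of →_{tr,𝐤} (i.e. there is no ν with μ→_{tr,𝐤}ν) if and only if μ=η_𝐤(λ) for some λ∈P. -/

import Mathlib

open RealInnerProductSpace Pointwise

noncomputable section

variable {V : Type*} [NormedAddCommGroup V] [InnerProductSpace ℝ V]

/-- The coroot `α∨ = 2α/⟨α,α⟩` associated to a vector `α`. -/
def coroot (α : V) : V := (2 / ⟪α, α⟫) • α

/-- The reflection `s_α(v) = v − ⟨v,α∨⟩α` across the hyperplane orthogonal to `α`. -/
def sRefl (α : V) (v : V) : V := v - ⟪v, coroot α⟫ • α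

/-- An irreducible reduced crystallographic root system in the real inner product
space `V`, together with a chosen set of positive roots and simple roots. -/
structure RootSystemData (V : Type*) [NormedAddCommGroup V] [InnerProductSpace ℝ V] where
  n : ℕ
  roots : Set V
  roots_finite : roots.Finite
  roots_nonzero : (0 : V) ∉ roots
  roots_span : Submodule.span ℝ roots = ⊤
  refl_mem : ∀ α ∈ roots, ∀ β ∈ roots, sRefl α β ∈ roots
  reduced : ∀ α ∈ roots, ∀ c : ℝ, c • α ∈ roots → c • α = α ∨ c • α = -α
  crystallographic : ∀ α ∈ roots, ∀ β ∈ roots, ∃ m : ℤ, ⟪β, coroot α⟫ = (m : ℝ)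
  pos : Set V
  pos_subset : pos ⊆ roots
  pos_union : roots = pos ∪ (-pos)
  simple : Fin n → V
  simple_mem : ∀ i, simple i ∈ pos
  simple_li : LinearIndependent ℝ simple
  simple_span : Submodule.span ℝ (Set.range simple) = ⊤
  pos_combo : ∀ α ∈ pos, ∃ c : Fin n → ℕ, α = ∑ i, (c i : ℝ) • simple i
  irred : ∀ S₁ S₂ : Set V, roots = S₁ ∪ S₂ →
    (∀ α ∈ S₁, ∀ β ∈ S₂, ⟪α, β⟫ = 0) → S₁ = ∅ ∨ S₂ = ∅

namespace RootSystemData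

variable (R : RootSystemData V)

/-- The Weyl group `W`: all finite compositions of reflections in roots. -/
def weyl : Set (V → V) :=
  {w | ∃ l : List V, (∀ α ∈ l, α ∈ R.roots) ∧ w = (l.map sRefl).foldr (· ∘ ·) id}

/-- The orbit `W(v)` of a vector under the Weyl group. -/
def orbit (v : V) : Set V := {u | ∃ w ∈ R.weyl, u = w v}

/-- The weight lattice `P`. -/
def weightLattice : Set V :=
  {v | ∀ α ∈ R.roots, ∃ m : ℤ, ⟪v, coroot α⟫ = (m : ℝ)}

/-- The permutohedron `Π(v) = ConvexHull W(v)`. -/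
def perm (v : V) : Set V := convexHull ℝ (R.orbit v)

/-- The discrete permutohedron `Π^Q(λ) = Π(λ) ∩ (Q+λ)`. -/
def permQ (lam : V) : Set V :=
  R.perm lam ∩ {v | v - lam ∈ Submodule.span ℤ R.roots}

/-- Dominance: nonnegative pairing with all simple coroots. -/
def IsDominant (v : V) : Prop := ∀ i, 0 ≤ ⟪v, coroot (R.simple i)⟫

/-- `W`-invariance of a function `𝐤 : Φ → ℕ`. -/
def IsWInvariant (k : V → ℕ) : Prop := ∀ w ∈ R.weyl, ∀ α ∈ R.roots, k (w α) = k α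

/-- Symmetric interval-firing: `λ → λ+α` for `α ∈ Φ⁺` whenever
`⟨λ,α∨⟩+1 ∈ {−𝐤(α),…,𝐤(α)}`. -/
def symFire (k : V → ℕ) (lam mu : V) : Prop :=
  lam ∈ R.weightLattice ∧ ∃ α ∈ R.pos, mu = lam + α ∧
    -(k α : ℝ) ≤ ⟪lam, coroot α⟫ + 1 ∧ ⟪lam, coroot α⟫ + 1 ≤ (k α : ℝ)

/-- Truncated interval-firing: `λ → λ+α` for `α ∈ Φ⁺` whenever
`⟨λ,α∨⟩+1 ∈ {−𝐤(α)+1,…,𝐤(α)}`. -/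
def trFire (k : V → ℕ) (lam mu : V) : Prop :=
  lam ∈ R.weightLattice ∧ ∃ α ∈ R.pos, mu = lam + α ∧
    -(k α : ℝ) + 1 ≤ ⟪lam, coroot α⟫ + 1 ∧ ⟪lam, coroot α⟫ + 1 ≤ (k α : ℝ)

/-- All roots have the same length. -/
def SimplyLaced : Prop := ∀ α ∈ R.roots, ∀ β ∈ R.roots, ‖α‖ = ‖β‖

/-- A root of maximal length. -/
def IsLongRoot (α : V) : Prop := α ∈ R.roots ∧ ∀ β ∈ R.roots, ‖β‖ ≤ ‖α‖

/-- A root which is not of maximal length. -/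
def IsShortRoot (α : V) : Prop := α ∈ R.roots ∧ ¬ R.IsLongRoot α

/-- `𝐤` is good: either `Φ` is simply laced, or `𝐤` vanishing on short roots
implies `𝐤` vanishing on all (in particular long) roots. -/
def IsGood (k : V → ℕ) : Prop :=
  R.SimplyLaced ∨ ((∀ α, R.IsShortRoot α → k α = 0) → ∀ β ∈ R.roots, k β = 0)

/-- The product of the simple reflections indexed by a word. -/
def wordProd (l : List (Fin R.n)) : V → V :=
  (l.map (fun i => sRefl (R.simple i))).foldr (· ∘ ·) id

/-- Coxeter length: the minimal length of a word in the simple reflections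
expressing `w`. -/
def coxLen (w : V → V) : ℕ :=
  sInf {m : ℕ | ∃ l : List (Fin R.n), l.length = m ∧ w = R.wordProd l}

/-- The parabolic subgroup `W_I`: all compositions of simple reflections `s_{αᵢ}`, `i ∈ I`. -/
def weylI (I : Set (Fin R.n)) : Set (V → V) :=
  {w | ∃ l : List (Fin R.n), (∀ i ∈ l, i ∈ I) ∧ w = R.wordProd l}

/-- The orbit `W_I(v)`. -/
def orbitI (I : Set (Fin R.n)) (v : V) : Set V := {u | ∃ w ∈ R.weylI I, u = w v}

/-- The discrete parabolic permutohedron `Π^Q_I(λ)`. -/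
def permQI (I : Set (Fin R.n)) (lam : V) : Set V :=
  convexHull ℝ (R.orbitI I lam) ∩ {v | v - lam ∈ Submodule.span ℤ R.roots}

/-- Given a choice `dm` of dominant representatives, `I^{0,1}_λ` is the set of
indices `i` with `⟨λ_dom, αᵢ∨⟩ ∈ {0,1}`. -/
def I01 (dm : V → V) (lam : V) : Set (Fin R.n) :=
  {i | ⟪dm lam, coroot (R.simple i)⟫ = 0 ∨ ⟪dm lam, coroot (R.simple i)⟫ = 1}

/-- The minimal length of an `α`-traverse in `Π^Q(λ)`. -/
def traverseLen (lam α : V) : ℕ :=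
  sInf {ℓ : ℕ | ∃ mu : V, (∀ i : ℕ, i ≤ ℓ → mu - (i : ℝ) • α ∈ R.permQ lam) ∧
    mu + α ∉ R.permQ lam ∧ mu - ((ℓ : ℝ) + 1) • α ∉ R.permQ lam}

/-- `m_λ(α) = min {cᵢ : αᵢ ∈ W(α)}` where `λ = Σ cᵢ ωᵢ` is dominant,
i.e. `cᵢ = ⟨λ, αᵢ∨⟩`. -/
def mVal (lam α : V) : ℕ :=
  sInf {c : ℕ | ∃ i, R.simple i ∈ R.orbit α ∧ (c : ℝ) = ⟪lam, coroot (R.simple i)⟫}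

/-- Funny weights (only exist when `Φ` is not simply laced). -/
def IsFunny (lam : V) : Prop :=
  ¬ R.SimplyLaced ∧ ∃ l s : Fin R.n, R.IsLongRoot (R.simple l) ∧ R.IsShortRoot (R.simple s) ∧
    ⟪R.simple l, coroot (R.simple s)⟫ ≠ 0 ∧
    ⟪lam, coroot (R.simple s)⟫ = 0 ∧ 1 ≤ ⟪lam, coroot (R.simple l)⟫ ∧
    ∀ i, R.IsLongRoot (R.simple i) → ⟪lam, coroot (R.simple l)⟫ ≤ ⟪lam, coroot (R.simple i)⟫

end RootSystemData

/-- The map `η_𝐤(λ) = λ + w_λ(ρ_𝐤)`, relative to a choice `fw` of fundamental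
weights and a choice `wl` of minimal-length Weyl elements `λ ↦ w_λ`. -/
def etaMap (R : RootSystemData V) (fw : Fin R.n → V) (wl : V → V → V)
    (k : V → ℕ) (lam : V) : V :=
  lam + wl lam (∑ i, (k (R.simple i) : ℝ) • fw i)

/-- Two points are in the same connected component of a relation if they are
related by its reflexive-transitive-symmetric closure. -/
def SameComponent (r : V → V → Prop) (x y : V) : Prop :=
  Relation.ReflTransGen (fun a b => r a b ∨ r b a) x y

/-!
The firing condition only involves the pairings `⟨μ, α∨⟩`, so `μ` is a sink exactly when
`⟨μ, α∨⟩ ∉ [-𝐤(α), 𝐤(α))` for every positive root `α`. Every positive root `β` is `W`-conjugate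
to a simple root `αⱼ` occurring in it, which gives `𝐤(β) ≤ ⟨ρ_𝐤, β∨⟩`.

If `μ = η_𝐤(λ) = w_λ(λ_dom + ρ_𝐤)` and `β = w_λ⁻¹(α)`, then `⟨μ, α∨⟩ = ⟨λ_dom + ρ_𝐤, β∨⟩`. This is
at least `𝐤(α)` when `β > 0`; when `β < 0`, minimality of `w_λ` forbids `⟨λ_dom, β∨⟩ = 0`
(otherwise `w_λ s_β` would be shorter), so `⟨μ, α∨⟩ ≤ -1 - 𝐤(α)`.

Conversely, if `μ = w_μ(ν)` with `ν` dominant is a sink, the sink condition at `±w_μ(αᵢ)` forces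
`⟨ν, αᵢ∨⟩ ≥ 𝐤(αᵢ)`, so `x := ν - ρ_𝐤` is dominant; together with the minimality of `w_μ` it also
forces `w_μ(αᵢ) > 0` whenever `⟨x, αᵢ∨⟩ = 0`. Put `λ := w_μ(x)`, so that `λ_dom = x`. Both `w_λ`
and `w_μ` map `x` to `λ` and send the positive roots orthogonal to `x` to positive roots (`w_λ` by
minimality), and such an element of `W` is unique. Hence `w_λ = w_μ` and
`η_𝐤(λ) = w_μ(x + ρ_𝐤) = μ`.
-/

section Reflections

lemma real_inner_coroot (α v : V) : ⟪v, coroot α⟫ = 2 / ⟪α, α⟫ * ⟪v, α⟫ := by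
  simp [coroot, real_inner_smul_right]

lemma coroot_neg (α : V) : coroot (-α) = -coroot α := by
  simp [coroot]

lemma inner_coroot_self {α : V} (h : α ≠ 0) : ⟪α, coroot α⟫ = 2 := by
  rw [real_inner_coroot]
  field_simp [inner_self_ne_zero.2 h]

lemma inner_coroot_pos_iff (x α : V) : 0 < ⟪x, coroot α⟫ ↔ 0 < ⟪x, α⟫ := by
  rcases eq_or_ne α 0 with rfl | hα
  · simp [coroot]
  · have : 0 < 2 / ⟪α, α⟫ := div_pos two_pos (real_inner_self_pos.2 hα)
    rw [real_inner_coroot, mul_pos_iff_of_pos_left this]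

lemma inner_coroot_nonneg_iff (x α : V) : 0 ≤ ⟪x, coroot α⟫ ↔ 0 ≤ ⟪x, α⟫ := by
  simpa [coroot_neg, not_lt] using (inner_coroot_pos_iff x (-α)).not

lemma inner_coroot_eq_zero_iff (x α : V) : ⟪x, coroot α⟫ = 0 ↔ ⟪x, α⟫ = 0 := by
  rcases eq_or_ne α 0 with rfl | hα
  · simp [coroot]
  · rw [real_inner_coroot, mul_eq_zero, or_iff_right (by simp [hα])]

lemma sRefl_add (α x y : V) : sRefl α (x + y) = sRefl α x + sRefl α y := by
  simp only [sRefl, inner_add_left, add_smul]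
  abel

lemma sRefl_smul (α : V) (c : ℝ) (x : V) : sRefl α (c • x) = c • sRefl α x := by
  simp only [sRefl, real_inner_smul_left, smul_sub, mul_smul]

lemma sRefl_neg_root (α : V) : sRefl (-α) = sRefl α := by
  funext v
  simp [sRefl, coroot_neg]

lemma sRefl_of_inner_eq_zero {α x : V} (h : ⟪x, coroot α⟫ = 0) : sRefl α x = x := by
  simp [sRefl, h]

lemma sRefl_self {α : V} (h : α ≠ 0) : sRefl α α = -α := by
  simp only [sRefl, inner_coroot_self h]
  module

lemma sRefl_sRefl {α : V} (h : α ≠ 0) (x : V) : sRefl α (sRefl α x) = x := by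
  simp only [sRefl, inner_sub_left, real_inner_smul_left, inner_coroot_self h]
  module

lemma inner_sRefl_left (α x y : V) : ⟪sRefl α x, y⟫ = ⟪x, sRefl α y⟫ := by
  simp only [sRefl, real_inner_coroot, inner_sub_left, inner_sub_right,
    real_inner_smul_left, real_inner_smul_right, real_inner_comm α x, real_inner_comm y α]
  ring

lemma inner_sRefl_sRefl {α : V} (h : α ≠ 0) (x y : V) :
    ⟪sRefl α x, sRefl α y⟫ = ⟪x, y⟫ := by
  rw [inner_sRefl_left, sRefl_sRefl h]

end Reflections

namespace RootSystemData

variable (R : RootSystemData V)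

structure IsRootIsometry (w : V → V) : Prop where
  map_add : ∀ x y, w (x + y) = w x + w y
  map_smul : ∀ (c : ℝ) x, w (c • x) = c • w x
  inner_map_map : ∀ x y, ⟪w x, w y⟫ = ⟪x, y⟫
  map_mem_roots : ∀ γ ∈ R.roots, w γ ∈ R.roots

variable {R}

namespace IsRootIsometry

variable {w : V → V} (hw : R.IsRootIsometry w)
include hw

def toLinearMap : V →ₗ[ℝ] V where
  toFun := w
  map_add' := hw.map_add
  map_smul' := hw.map_smul

lemma map_neg (x : V) : w (-x) = -w x := hw.toLinearMap.map_neg x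

lemma map_sub (x y : V) : w (x - y) = w x - w y := hw.toLinearMap.map_sub x y

lemma map_sum {ι : Type*} (s : Finset ι) (f : ι → V) : w (∑ i ∈ s, f i) = ∑ i ∈ s, w (f i) :=
  _root_.map_sum hw.toLinearMap f s

lemma map_coroot (γ : V) : w (coroot γ) = coroot (w γ) := by
  rw [coroot, coroot, hw.map_smul, hw.inner_map_map]

lemma inner_coroot_map_map (x γ : V) : ⟪w x, coroot (w γ)⟫ = ⟪x, coroot γ⟫ := by
  rw [← hw.map_coroot, hw.inner_map_map]

lemma map_sRefl (γ x : V) : w (sRefl γ x) = sRefl (w γ) (w x) := by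
  rw [sRefl, sRefl, ← hw.inner_coroot_map_map x γ, hw.map_sub, hw.map_smul]

end IsRootIsometry

lemma isRootIsometry_id : R.IsRootIsometry id :=
  ⟨fun _ _ => rfl, fun _ _ => rfl, fun _ _ => rfl, fun _ hγ => hγ⟩

lemma IsRootIsometry.comp {w w' : V → V} (hw : R.IsRootIsometry w) (hw' : R.IsRootIsometry w') :
    R.IsRootIsometry (w ∘ w') where
  map_add x y := by simp [hw.map_add, hw'.map_add]
  map_smul c x := by simp [hw.map_smul, hw'.map_smul]
  inner_map_map x y := by simp [hw.inner_map_map, hw'.inner_map_map]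
  map_mem_roots γ hγ := hw.map_mem_roots _ (hw'.map_mem_roots γ hγ)

lemma root_ne_zero {γ : V} (hγ : γ ∈ R.roots) : γ ≠ 0 :=
  fun h => R.roots_nonzero (h ▸ hγ)

lemma isRootIsometry_sRefl {γ : V} (hγ : γ ∈ R.roots) : R.IsRootIsometry (sRefl γ) :=
  ⟨sRefl_add γ, sRefl_smul γ, inner_sRefl_sRefl (R.root_ne_zero hγ), R.refl_mem γ hγ⟩

lemma sRefl_comp_mem_weyl {γ : V} (hγ : γ ∈ R.roots) {w : V → V} (hw : w ∈ R.weyl) :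
    sRefl γ ∘ w ∈ R.weyl := by
  obtain ⟨l, hl, rfl⟩ := hw
  exact ⟨γ :: l, List.forall_mem_cons.2 ⟨hγ, hl⟩, rfl⟩

lemma weyl_induction {p : (V → V) → Prop} (h_id : p id)
    (h_comp : ∀ γ ∈ R.roots, ∀ w ∈ R.weyl, p w → p (sRefl γ ∘ w))
    {w : V → V} (hw : w ∈ R.weyl) : p w := by
  obtain ⟨l, hl, rfl⟩ := hw
  induction l with
  | nil => exact h_id
  | cons γ l ih =>
    rw [List.forall_mem_cons] at hl
    exact h_comp γ hl.1 _ ⟨l, hl.2, rfl⟩ (ih hl.2)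

lemma id_mem_weyl : (id : V → V) ∈ R.weyl := ⟨[], by simp, rfl⟩

lemma sRefl_mem_weyl {γ : V} (hγ : γ ∈ R.roots) : sRefl γ ∈ R.weyl :=
  R.sRefl_comp_mem_weyl hγ R.id_mem_weyl

lemma comp_mem_weyl {w w' : V → V} (hw : w ∈ R.weyl) (hw' : w' ∈ R.weyl) : w ∘ w' ∈ R.weyl :=
  R.weyl_induction (p := fun u => u ∘ w' ∈ R.weyl) hw'
    (fun _ hγ _ _ h => R.sRefl_comp_mem_weyl hγ h) hw

lemma mem_orbit_trans {x y z : V} (hz : z ∈ R.orbit y) (hy : y ∈ R.orbit x) : z ∈ R.orbit x := by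
  obtain ⟨w, hw, rfl⟩ := hz
  obtain ⟨w', hw', rfl⟩ := hy
  exact ⟨w ∘ w', R.comp_mem_weyl hw hw', rfl⟩

lemma isRootIsometry_of_mem_weyl {w : V → V} (hw : w ∈ R.weyl) : R.IsRootIsometry w :=
  R.weyl_induction R.isRootIsometry_id
    (fun _ hγ _ _ h => (R.isRootIsometry_sRefl hγ).comp h) hw

lemma exists_inverse_mem_weyl {w : V → V} (hw : w ∈ R.weyl) :
    ∃ w' ∈ R.weyl, Function.LeftInverse w' w ∧ Function.RightInverse w' w := by
  refine R.weyl_induction (p := fun w => ∃ w' ∈ R.weyl,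
    Function.LeftInverse w' w ∧ Function.RightInverse w' w)
    ⟨id, R.id_mem_weyl, fun _ => rfl, fun _ => rfl⟩ ?_ hw
  rintro γ hγ w - ⟨w', hw', hl, hr⟩
  have hγ0 := R.root_ne_zero hγ
  refine ⟨w' ∘ sRefl γ, R.comp_mem_weyl hw' (R.sRefl_mem_weyl hγ), fun x => ?_, fun x => ?_⟩
  · simp [sRefl_sRefl hγ0, hl x]
  · simp [hr (sRefl γ x), sRefl_sRefl hγ0]

lemma sRefl_mem_weightLattice {γ x : V} (hγ : γ ∈ R.roots) (hx : x ∈ R.weightLattice) :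
    sRefl γ x ∈ R.weightLattice := by
  intro δ hδ
  obtain ⟨a, ha⟩ := hx δ hδ
  obtain ⟨b, hb⟩ := hx γ hγ
  obtain ⟨c, hc⟩ := R.crystallographic δ hδ γ hγ
  exact ⟨a - b * c, by simp [sRefl, inner_sub_left, real_inner_smul_left, ha, hb, hc]⟩

lemma mem_weightLattice_of_mem_weyl {w : V → V} (hw : w ∈ R.weyl) {x : V}
    (hx : x ∈ R.weightLattice) : w x ∈ R.weightLattice :=
  R.weyl_induction (p := fun u => u x ∈ R.weightLattice) hx
    (fun _ hγ _ _ h => R.sRefl_mem_weightLattice hγ h) hw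

lemma mem_weightLattice_of_mem_orbit {x y : V} (hx : x ∈ R.weightLattice) (hy : y ∈ R.orbit x) :
    y ∈ R.weightLattice := by
  obtain ⟨w, hw, rfl⟩ := hy
  exact R.mem_weightLattice_of_mem_weyl hw hx

lemma sub_mem_weightLattice {x y : V} (hx : x ∈ R.weightLattice) (hy : y ∈ R.weightLattice) :
    x - y ∈ R.weightLattice := by
  intro γ hγ
  obtain ⟨a, ha⟩ := hx γ hγ
  obtain ⟨b, hb⟩ := hy γ hγ
  exact ⟨a - b, by rw [inner_sub_left, ha, hb]; push_cast; ring⟩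

lemma simple_mem_roots (i : Fin R.n) : R.simple i ∈ R.roots := R.pos_subset (R.simple_mem i)

lemma simple_ne_zero (i : Fin R.n) : R.simple i ≠ 0 := R.root_ne_zero (R.simple_mem_roots i)

lemma wordProd_cons (i : Fin R.n) (l : List (Fin R.n)) :
    R.wordProd (i :: l) = sRefl (R.simple i) ∘ R.wordProd l := rfl

lemma wordProd_append (l l' : List (Fin R.n)) :
    R.wordProd (l ++ l') = R.wordProd l ∘ R.wordProd l' := by
  induction l with
  | nil => rfl
  | cons i l ih => rw [List.cons_append, wordProd_cons, wordProd_cons, ih]; rfl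

lemma wordProd_mem_weyl (l : List (Fin R.n)) : R.wordProd l ∈ R.weyl := by
  induction l with
  | nil => exact R.id_mem_weyl
  | cons i l ih => exact R.sRefl_comp_mem_weyl (R.simple_mem_roots i) ih

lemma wordProd_reverse_apply (l : List (Fin R.n)) (x : V) :
    R.wordProd l.reverse (R.wordProd l x) = x := by
  induction l generalizing x with
  | nil => rfl
  | cons i l ih =>
    rw [List.reverse_cons, wordProd_append]
    change R.wordProd l.reverse (sRefl (R.simple i) (sRefl (R.simple i) (R.wordProd l x))) = x
    rw [sRefl_sRefl (R.simple_ne_zero i), ih]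

variable (R) in
def simpleBasis : Module.Basis (Fin R.n) ℝ V :=
  Module.Basis.mk R.simple_li R.simple_span.ge

@[simp]
lemma simpleBasis_apply (i : Fin R.n) : R.simpleBasis i = R.simple i :=
  Module.Basis.mk_apply _ _ i

lemma sum_repr_smul_simple (β : V) : ∑ i, R.simpleBasis.repr β i • R.simple i = β := by
  simpa using R.simpleBasis.sum_repr β

lemma repr_simple (i j : Fin R.n) :
    R.simpleBasis.repr (R.simple i) j = if i = j then 1 else 0 := by
  rw [← simpleBasis_apply, Module.Basis.repr_self, Finsupp.single_apply]

lemma real_inner_eq_sum_repr (x β : V) :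
    ⟪x, β⟫ = ∑ i, R.simpleBasis.repr β i * ⟪x, R.simple i⟫ := by
  conv_lhs => rw [← R.sum_repr_smul_simple β]
  simp [inner_sum, real_inner_smul_right]

lemma repr_nonneg_of_mem_pos {β : V} (hβ : β ∈ R.pos) (i : Fin R.n) :
    0 ≤ R.simpleBasis.repr β i := by
  obtain ⟨c, rfl⟩ := R.pos_combo β hβ
  simp_rw [← simpleBasis_apply, Module.Basis.repr_sum_self]
  positivity

lemma eq_zero_of_repr_nonneg_of_repr_neg_nonneg {β : V} (h : ∀ i, 0 ≤ R.simpleBasis.repr β i)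
    (h' : ∀ i, 0 ≤ R.simpleBasis.repr (-β) i) : β = 0 := by
  rw [← R.simpleBasis.repr.map_eq_zero_iff]
  ext i
  have := h' i
  simp only [map_neg, Finsupp.neg_apply, neg_nonneg] at this
  exact le_antisymm this (h i)

lemma neg_notMem_pos {β : V} (hβ : β ∈ R.pos) : -β ∉ R.pos := fun hβ' =>
  R.root_ne_zero (R.pos_subset hβ) (R.eq_zero_of_repr_nonneg_of_repr_neg_nonneg
    (R.repr_nonneg_of_mem_pos hβ) (R.repr_nonneg_of_mem_pos hβ'))

lemma mem_pos_or_neg_mem_pos {γ : V} (hγ : γ ∈ R.roots) : γ ∈ R.pos ∨ -γ ∈ R.pos := by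
  rw [R.pos_union] at hγ
  exact hγ

lemma mem_pos_of_repr_nonneg {γ : V} (hγ : γ ∈ R.roots) (h : ∀ i, 0 ≤ R.simpleBasis.repr γ i) :
    γ ∈ R.pos :=
  (R.mem_pos_or_neg_mem_pos hγ).resolve_right fun hγ' => R.root_ne_zero hγ
    (R.eq_zero_of_repr_nonneg_of_repr_neg_nonneg h (R.repr_nonneg_of_mem_pos hγ'))

lemma sRefl_simple_mem_pos {β : V} (hβ : β ∈ R.pos) {i : Fin R.n} (hne : β ≠ R.simple i) :
    sRefl (R.simple i) β ∈ R.pos := by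
  have hδ : sRefl (R.simple i) β ∈ R.roots :=
    R.refl_mem _ (R.simple_mem_roots i) _ (R.pos_subset hβ)
  refine (R.mem_pos_or_neg_mem_pos hδ).resolve_right fun hδ' => ?_
  -- `s_i` only changes the `i`-th coordinate, so `β` would be a multiple of `αᵢ`
  have hrepr : ∀ j ≠ i, R.simpleBasis.repr β j = 0 := fun j hj => by
    have := R.repr_nonneg_of_mem_pos hδ' j
    simp only [sRefl, map_neg, map_sub, map_smul, Finsupp.neg_apply, Finsupp.sub_apply,
      Finsupp.smul_apply, repr_simple, if_neg hj.symm, smul_zero, sub_zero, neg_nonneg] at this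
    exact le_antisymm this (R.repr_nonneg_of_mem_pos hβ j)
  have hβi : R.simpleBasis.repr β i • R.simple i = β := by
    conv_rhs => rw [← R.sum_repr_smul_simple β]
    rw [Finset.sum_eq_single i (fun j _ hj => by rw [hrepr j hj, zero_smul]) (by simp)]
  rcases R.reduced _ (R.simple_mem_roots i) _ (hβi ▸ R.pos_subset hβ) with h | h
  · exact hne (hβi.symm.trans h)
  · exact R.neg_notMem_pos hβ (by rw [← hβi, h, neg_neg]; exact R.simple_mem i)

lemma exists_inner_coroot_simple_pos {β : V} (hβ : β ∈ R.pos) :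
    ∃ i, 0 < ⟪β, coroot (R.simple i)⟫ := by
  by_contra! h
  have hle : ⟪β, β⟫ ≤ 0 := by
    rw [R.real_inner_eq_sum_repr]
    refine Finset.sum_nonpos fun i _ => mul_nonpos_of_nonneg_of_nonpos
      (R.repr_nonneg_of_mem_pos hβ i) ?_
    exact not_lt.1 fun h' => (h i).not_gt ((inner_coroot_pos_iff _ _).2 h')
  exact R.root_ne_zero (R.pos_subset hβ) (real_inner_self_nonpos.1 hle)

lemma exists_wordProd_simple_eq_of_height_le (N : ℕ) {β : V} (hβ : β ∈ R.pos)
    (hN : ∑ i, R.simpleBasis.repr β i ≤ N) :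
    ∃ (l : List (Fin R.n)) (j : Fin R.n),
      R.wordProd l (R.simple j) = β ∧ 1 ≤ R.simpleBasis.repr β j := by
  induction N generalizing β with
  | zero =>
    refine absurd (R.eq_zero_of_repr_nonneg_of_repr_neg_nonneg (R.repr_nonneg_of_mem_pos hβ)
      fun i => ?_) (R.root_ne_zero (R.pos_subset hβ))
    have := (Finset.sum_eq_zero_iff_of_nonneg fun i _ => R.repr_nonneg_of_mem_pos hβ i).1
      (le_antisymm (by exact_mod_cast hN) (Finset.sum_nonneg fun i _ =>
        R.repr_nonneg_of_mem_pos hβ i)) i (Finset.mem_univ i)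
    simp [this]
  | succ N ih =>
    obtain ⟨i, hi⟩ := R.exists_inner_coroot_simple_pos hβ
    by_cases hβi : β = R.simple i
    · exact ⟨[], i, hβi.symm, by simp [hβi, repr_simple]⟩
    obtain ⟨m, hm⟩ := R.crystallographic _ (R.simple_mem_roots i) β (R.pos_subset hβ)
    have hm1 : (1 : ℝ) ≤ m := by
      rw [hm] at hi
      exact_mod_cast (show (0 : ℤ) < m by exact_mod_cast hi)
    -- `s_i β = β - m αᵢ` is a positive root of height `height β - m`
    have hrepr : ∀ j, R.simpleBasis.repr (sRefl (R.simple i) β) j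
        = R.simpleBasis.repr β j - m * if i = j then 1 else 0 := fun j => by
      simp [sRefl, hm, repr_simple]
    obtain ⟨l, j, hl, hj⟩ := ih (R.sRefl_simple_mem_pos hβ hβi) (by
      simp only [hrepr, Finset.sum_sub_distrib, ← Finset.mul_sum, Finset.sum_ite_eq,
        Finset.mem_univ, if_true, mul_one]
      push_cast at hN
      linarith)
    refine ⟨i :: l, j, ?_, ?_⟩
    · rw [wordProd_cons, Function.comp_apply, hl, sRefl_sRefl (R.simple_ne_zero i)]
    · have : 0 ≤ (m : ℝ) * if i = j then 1 else 0 := by positivity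
      linarith [hrepr j]

lemma exists_wordProd_simple_eq {β : V} (hβ : β ∈ R.pos) :
    ∃ (l : List (Fin R.n)) (j : Fin R.n),
      R.wordProd l (R.simple j) = β ∧ 1 ≤ R.simpleBasis.repr β j :=
  R.exists_wordProd_simple_eq_of_height_le _ hβ (Nat.le_ceil _)

lemma exists_sRefl_eq_wordProd {γ : V} (hγ : γ ∈ R.roots) : ∃ l, sRefl γ = R.wordProd l := by
  wlog hγ' : γ ∈ R.pos generalizing γ
  · obtain ⟨l, hl⟩ := this (R.pos_subset ((R.mem_pos_or_neg_mem_pos hγ).resolve_left hγ'))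
      ((R.mem_pos_or_neg_mem_pos hγ).resolve_left hγ')
    exact ⟨l, by rw [← sRefl_neg_root, hl]⟩
  obtain ⟨l, j, hl, -⟩ := R.exists_wordProd_simple_eq hγ'
  -- `s_{w αⱼ} = w s_j w⁻¹`
  refine ⟨l ++ j :: l.reverse, funext fun x => ?_⟩
  have hx := R.wordProd_reverse_apply l.reverse x
  rw [List.reverse_reverse] at hx
  rw [wordProd_append, wordProd_cons, Function.comp_apply, Function.comp_apply,
    (R.isRootIsometry_of_mem_weyl (R.wordProd_mem_weyl l)).map_sRefl, hl, hx]

lemma exists_eq_wordProd {w : V → V} (hw : w ∈ R.weyl) : ∃ l, w = R.wordProd l :=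
  R.weyl_induction (p := fun w => ∃ l, w = R.wordProd l) ⟨[], rfl⟩
    (fun _ hγ _ _ ⟨l, hl⟩ => by
      obtain ⟨l', hl'⟩ := R.exists_sRefl_eq_wordProd hγ
      exact ⟨l' ++ l, by rw [wordProd_append, hl, hl']⟩) hw

lemma coxLen_le_length {w : V → V} {l : List (Fin R.n)} (h : w = R.wordProd l) :
    R.coxLen w ≤ l.length :=
  Nat.sInf_le ⟨l, rfl, h⟩

lemma exists_length_eq_coxLen {w : V → V} (hw : w ∈ R.weyl) :
    ∃ l : List (Fin R.n), l.length = R.coxLen w ∧ w = R.wordProd l := by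
  obtain ⟨l, hl⟩ := R.exists_eq_wordProd hw
  exact Nat.sInf_mem (s := {m | ∃ l : List (Fin R.n), l.length = m ∧ w = R.wordProd l})
    ⟨l.length, l, rfl, hl⟩

lemma exists_minimal_mem_weyl {w : V → V} (hw : w ∈ R.weyl) (x : V) :
    ∃ v ∈ R.weyl, v x = w x ∧ ∀ u ∈ R.weyl, u x = w x → R.coxLen v ≤ R.coxLen u := by
  obtain ⟨v, ⟨hv, hvx⟩, hmin⟩ :=
    (measure R.coxLen).wf.has_min {u | u ∈ R.weyl ∧ u x = w x} ⟨w, hw, rfl⟩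
  exact ⟨v, hv, hvx, fun u hu hux => not_lt.1 (hmin u ⟨hu, hux⟩)⟩

/-- The exchange property. -/
lemma exists_wordProd_eq_comp_sRefl (l : List (Fin R.n)) {β : V} (hβ : β ∈ R.pos)
    (hneg : -R.wordProd l β ∈ R.pos) :
    ∃ l' : List (Fin R.n), l'.length + 1 = l.length ∧ R.wordProd l' = R.wordProd l ∘ sRefl β := by
  induction l with
  | nil => exact absurd hneg (R.neg_notMem_pos hβ)
  | cons i l ih =>
    have hw := R.isRootIsometry_of_mem_weyl (R.wordProd_mem_weyl l)
    rcases R.mem_pos_or_neg_mem_pos (hw.map_mem_roots β (R.pos_subset hβ)) with hp | hp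
    · have heq : R.wordProd l β = R.simple i := by
        by_contra hne
        exact R.neg_notMem_pos (R.sRefl_simple_mem_pos hp hne) hneg
      refine ⟨l, rfl, funext fun x => ?_⟩
      simp only [wordProd_cons, Function.comp_apply, hw.map_sRefl, heq,
        sRefl_sRefl (R.simple_ne_zero i)]
    · obtain ⟨l', hlen, hl'⟩ := ih hp
      exact ⟨i :: l', by simp [hlen], by rw [wordProd_cons, wordProd_cons, hl']; rfl⟩

lemma map_mem_pos_of_minimal {v : V → V} (hv : v ∈ R.weyl) {x y : V} (hvx : v x = y)
    (hmin : ∀ w ∈ R.weyl, w x = y → R.coxLen v ≤ R.coxLen w)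
    {β : V} (hβ : β ∈ R.pos) (hxβ : ⟪x, coroot β⟫ = 0) : v β ∈ R.pos := by
  refine (R.mem_pos_or_neg_mem_pos ((R.isRootIsometry_of_mem_weyl hv).map_mem_roots β
    (R.pos_subset hβ))).resolve_right fun hneg => ?_
  obtain ⟨l, hlen, rfl⟩ := R.exists_length_eq_coxLen hv
  obtain ⟨l', hlen', hl'⟩ := R.exists_wordProd_eq_comp_sRefl l hβ hneg
  have := hmin _ (R.comp_mem_weyl hv (R.sRefl_mem_weyl (R.pos_subset hβ)))
    (by rw [Function.comp_apply, sRefl_of_inner_eq_zero hxβ, hvx])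
  have := R.coxLen_le_length hl'.symm
  omega

lemma eq_id_of_map_pos {w : V → V} (hw : w ∈ R.weyl) (hpos : ∀ β ∈ R.pos, w β ∈ R.pos) :
    w = id := by
  obtain ⟨_ | ⟨i, l⟩, hlen, rfl⟩ := R.exists_length_eq_coxLen hw
  · rfl
  exfalso
  have hw' := R.isRootIsometry_of_mem_weyl hw
  obtain ⟨w', hw'mem, -, hr⟩ := R.exists_inverse_mem_weyl hw
  set δ := w' (R.simple i)
  have hδ : δ ∈ R.pos := (R.mem_pos_or_neg_mem_pos ((R.isRootIsometry_of_mem_weyl hw'mem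
    ).map_mem_roots _ (R.simple_mem_roots i))).resolve_right fun h =>
      R.neg_notMem_pos (R.simple_mem i) (by simpa [hw'.map_neg, δ, hr _] using hpos _ h)
  have hl : R.wordProd l = sRefl (R.simple i) ∘ R.wordProd (i :: l) := by
    funext x
    simp [wordProd_cons, sRefl_sRefl (R.simple_ne_zero i)]
  obtain ⟨l', hlen', hl'⟩ := R.exists_wordProd_eq_comp_sRefl l hδ (by
    simp [hl, hr _, δ, sRefl_self (R.simple_ne_zero i), R.simple_mem i])
  -- `s_i w s_δ = s_i s_{w δ} w = w`, so `w` has a word of length `l.length - 1`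
  have : R.wordProd (i :: l) = R.wordProd l' := by
    funext x
    simp [hl', hl, hw'.map_sRefl, hr _, δ, sRefl_sRefl (R.simple_ne_zero i)]
  have := R.coxLen_le_length this
  simp only [List.length_cons] at hlen
  omega

lemma inner_simple_nonneg {x : V} (hx : R.IsDominant x) (i : Fin R.n) : 0 ≤ ⟪x, R.simple i⟫ :=
  (inner_coroot_nonneg_iff _ _).1 (hx i)

lemma inner_coroot_nonneg {x β : V} (hx : R.IsDominant x) (hβ : β ∈ R.pos) :
    0 ≤ ⟪x, coroot β⟫ := by
  rw [inner_coroot_nonneg_iff, R.real_inner_eq_sum_repr]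
  exact Finset.sum_nonneg fun i _ =>
    mul_nonneg (R.repr_nonneg_of_mem_pos hβ i) (R.inner_simple_nonneg hx i)

lemma inner_coroot_simple_eq_zero {x β : V} (hx : R.IsDominant x) (hβ : β ∈ R.pos)
    (hxβ : ⟪x, coroot β⟫ = 0) {i : Fin R.n} (hi : R.simpleBasis.repr β i ≠ 0) :
    ⟪x, coroot (R.simple i)⟫ = 0 := by
  rw [inner_coroot_eq_zero_iff, R.real_inner_eq_sum_repr] at hxβ
  have := (Finset.sum_eq_zero_iff_of_nonneg fun j _ => mul_nonneg
    (R.repr_nonneg_of_mem_pos hβ j) (R.inner_simple_nonneg hx j)).1 hxβ i (Finset.mem_univ i)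
  rw [inner_coroot_eq_zero_iff]
  exact (mul_eq_zero.1 this).resolve_left hi

lemma map_mem_pos_of_inner_coroot_eq_zero {x : V} (hx : R.IsDominant x) {w : V → V}
    (hw : R.IsRootIsometry w) (h : ∀ i, ⟪x, coroot (R.simple i)⟫ = 0 → w (R.simple i) ∈ R.pos)
    {β : V} (hβ : β ∈ R.pos) (hxβ : ⟪x, coroot β⟫ = 0) : w β ∈ R.pos := by
  -- `β` is a nonnegative combination of the simple roots orthogonal to `x`
  refine R.mem_pos_of_repr_nonneg (hw.map_mem_roots β (R.pos_subset hβ)) fun j => ?_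
  rw [← R.sum_repr_smul_simple β]
  simp only [hw.map_sum, hw.map_smul, map_sum, map_smul, Finsupp.coe_finsetSum,
    Finsupp.coe_smul, Finset.sum_apply, Pi.smul_apply, smul_eq_mul]
  refine Finset.sum_nonneg fun i _ => ?_
  rcases eq_or_ne (R.simpleBasis.repr β i) 0 with hi | hi
  · simp [hi]
  · exact mul_nonneg (R.repr_nonneg_of_mem_pos hβ i)
      (R.repr_nonneg_of_mem_pos (h i (R.inner_coroot_simple_eq_zero hx hβ hxβ hi)) j)

lemma isDominant_zero : R.IsDominant 0 := fun _ => by simp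

lemma eq_id_of_map_simple_mem_pos {w : V → V} (hw : w ∈ R.weyl)
    (h : ∀ i, w (R.simple i) ∈ R.pos) : w = id :=
  R.eq_id_of_map_pos hw fun _ hβ => R.map_mem_pos_of_inner_coroot_eq_zero R.isDominant_zero
    (R.isRootIsometry_of_mem_weyl hw) (fun i _ => h i) hβ (by simp)

lemma eq_of_minimal_of_map_pos {x y : V} (hx : R.IsDominant x) {v σ : V → V}
    (hv : v ∈ R.weyl) (hvx : v x = y) (hmin : ∀ w ∈ R.weyl, w x = y → R.coxLen v ≤ R.coxLen w)
    (hσ : σ ∈ R.weyl) (hσx : σ x = y)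
    (hσpos : ∀ β ∈ R.pos, ⟪x, coroot β⟫ = 0 → σ β ∈ R.pos) : v = σ := by
  obtain ⟨σ', hσ', hl, hr⟩ := R.exists_inverse_mem_weyl hσ
  have hu := R.isRootIsometry_of_mem_weyl (R.comp_mem_weyl hσ' hv)
  have hux : σ' (v x) = x := by rw [hvx, ← hσx, hl]
  have hid : σ' ∘ v = id := R.eq_id_of_map_simple_mem_pos (R.comp_mem_weyl hσ' hv) fun i => by
    set γ := -σ' (v (R.simple i))
    refine (R.mem_pos_or_neg_mem_pos (hu.map_mem_roots _ (R.simple_mem_roots i))).resolve_right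
      fun hγ => ?_
    have hxi : ⟪x, coroot (R.simple i)⟫ = -⟪x, coroot γ⟫ := by
      rw [← hu.inner_coroot_map_map, Function.comp_apply, hux, coroot_neg, inner_neg_right,
        Function.comp_apply, neg_neg]
    have hxγ : ⟪x, coroot γ⟫ = 0 := by
      linarith [hx i, R.inner_coroot_nonneg (β := γ) hx hγ]
    have hvi : v (R.simple i) = -σ γ := by
      rw [(R.isRootIsometry_of_mem_weyl hσ).map_neg, hr, neg_neg]
    exact R.neg_notMem_pos (hσpos γ hγ hxγ)
      (hvi ▸ R.map_mem_pos_of_minimal hv hvx hmin (R.simple_mem i) (by linarith))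
  funext y
  rw [← hr (v y)]
  exact congrArg σ (congrFun hid y)

lemma eq_of_isDominant_of_mem_orbit {x y : V} (hx : R.IsDominant x) (hy : R.IsDominant y)
    (hxy : y ∈ R.orbit x) : y = x := by
  obtain ⟨w, hw, rfl⟩ := hxy
  obtain ⟨v, hv, hvx, hmin⟩ := R.exists_minimal_mem_weyl hw x
  have hvi : R.IsRootIsometry v := R.isRootIsometry_of_mem_weyl hv
  have : v = id := R.eq_id_of_map_simple_mem_pos hv fun i => by
    rcases (hx i).eq_or_lt with h | h
    · exact R.map_mem_pos_of_minimal hv hvx hmin (R.simple_mem i) h.symm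
    · refine (R.mem_pos_or_neg_mem_pos (hvi.map_mem_roots _ (R.simple_mem_roots i))).resolve_right
        fun hneg => ?_
      have := R.inner_coroot_nonneg hy hneg
      rw [← hvx, coroot_neg, inner_neg_right, hvi.inner_coroot_map_map] at this
      linarith
  rw [← hvx, this, id]

lemma mem_weightLattice_of_inner_coroot_simple {x : V}
    (hx : ∀ i, ∃ m : ℤ, ⟪x, coroot (R.simple i)⟫ = m) : x ∈ R.weightLattice := by
  have hword : ∀ (l : List (Fin R.n)) (j : Fin R.n),
      ∃ m : ℤ, ⟪x, coroot (R.wordProd l (R.simple j))⟫ = m := by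
    intro l j
    induction l with
    | nil => exact hx j
    | cons i l ih =>
      obtain ⟨a, ha⟩ := ih
      obtain ⟨b, hb⟩ := hx i
      have hδ := (R.isRootIsometry_of_mem_weyl (R.wordProd_mem_weyl l)).map_mem_roots _
        (R.simple_mem_roots j)
      obtain ⟨c, hc⟩ := R.crystallographic _ hδ _ (R.simple_mem_roots i)
      refine ⟨a - b * c, ?_⟩
      rw [wordProd_cons, Function.comp_apply,
        ← (R.isRootIsometry_sRefl (R.simple_mem_roots i)).map_coroot, ← inner_sRefl_left]
      simp [sRefl, inner_sub_left, real_inner_smul_left, ha, hb, hc]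
  intro γ hγ
  rcases R.mem_pos_or_neg_mem_pos hγ with hp | hp
  · obtain ⟨l, j, rfl, -⟩ := R.exists_wordProd_simple_eq hp
    exact hword l j
  · obtain ⟨l, j, hl, -⟩ := R.exists_wordProd_simple_eq hp
    obtain ⟨m, hm⟩ := hword l j
    exact ⟨-m, by rw [← neg_neg γ, ← hl, coroot_neg, inner_neg_right, hm, Int.cast_neg]⟩

variable {k : V → ℕ}

lemma IsWInvariant.apply_neg (hk : R.IsWInvariant k) {γ : V} (hγ : γ ∈ R.roots) :
    k (-γ) = k γ := by
  simpa [sRefl_self (R.root_ne_zero hγ)] using hk _ (R.sRefl_mem_weyl hγ) γ hγ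

lemma IsWInvariant.le_inner_coroot (hk : R.IsWInvariant k) {ρ : V}
    (hρ : ∀ i, (k (R.simple i) : ℝ) ≤ ⟪ρ, coroot (R.simple i)⟫) {β : V} (hβ : β ∈ R.pos) :
    (k β : ℝ) ≤ ⟪ρ, coroot β⟫ := by
  obtain ⟨l, j, rfl, hj⟩ := R.exists_wordProd_simple_eq hβ
  have hw := R.isRootIsometry_of_mem_weyl (R.wordProd_mem_weyl l)
  have hρdom : R.IsDominant ρ := fun i => le_trans (Nat.cast_nonneg _) (hρ i)
  have hρj := R.inner_simple_nonneg hρdom j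
  -- `⟨ρ, β⟩ ≥ cⱼ ⟨ρ, αⱼ⟩ ≥ ⟨ρ, αⱼ⟩`, and `β`, `αⱼ` have the same length
  have hle : ⟪ρ, R.simple j⟫ ≤ ⟪ρ, R.wordProd l (R.simple j)⟫ := by
    rw [R.real_inner_eq_sum_repr ρ (R.wordProd l _)]
    refine le_trans ?_ (Finset.single_le_sum (fun i _ => mul_nonneg
      (R.repr_nonneg_of_mem_pos hβ i) (R.inner_simple_nonneg hρdom i)) (Finset.mem_univ j))
    nlinarith
  calc (k (R.wordProd l (R.simple j)) : ℝ) = k (R.simple j) :=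
        by rw [hk _ (R.wordProd_mem_weyl l) _ (R.simple_mem_roots j)]
    _ ≤ ⟪ρ, coroot (R.simple j)⟫ := hρ j
    _ ≤ ⟪ρ, coroot (R.wordProd l (R.simple j))⟫ := by
        rw [real_inner_coroot, real_inner_coroot, hw.inner_map_map]
        exact mul_le_mul_of_nonneg_left hle (div_nonneg zero_le_two real_inner_self_nonneg)

variable (k) in
lemma not_exists_trFire_iff {mu : V} (hmu : mu ∈ R.weightLattice) :
    (¬ ∃ ν, R.trFire k mu ν) ↔ ∀ α ∈ R.pos, ⟪mu, coroot α⟫ ∉ Set.Ico (-(k α : ℝ)) (k α) := by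
  have hfire : ∀ α ∈ R.pos, (-(k α : ℝ) + 1 ≤ ⟪mu, coroot α⟫ + 1 ∧ ⟪mu, coroot α⟫ + 1 ≤ k α) ↔
      ⟪mu, coroot α⟫ ∈ Set.Ico (-(k α : ℝ)) (k α) := fun α hα => by
    obtain ⟨m, hm⟩ := hmu α (R.pos_subset hα)
    rw [hm, Set.mem_Ico]
    norm_cast
    omega
  constructor
  · exact fun h α hα hmem => h ⟨mu + α, hmu, α, hα, rfl, (hfire α hα).2 hmem⟩
  · exact fun h ⟨_, _, α, hα, _, hα'⟩ => h α hα ((hfire α hα).1 hα')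

lemma inner_coroot_notMem_Ico {x : V} (hx : R.IsDominant x) (hxP : x ∈ R.weightLattice)
    (hk : R.IsWInvariant k) {ρ : V} (hρ : ∀ β ∈ R.pos, (k β : ℝ) ≤ ⟪ρ, coroot β⟫)
    {v : V → V} (hv : v ∈ R.weyl) {y : V} (hvx : v x = y)
    (hmin : ∀ w ∈ R.weyl, w x = y → R.coxLen v ≤ R.coxLen w) {α : V} (hα : α ∈ R.pos) :
    ⟪v (x + ρ), coroot α⟫ ∉ Set.Ico (-(k α : ℝ)) (k α) := by
  obtain ⟨v', hv', -, hr⟩ := R.exists_inverse_mem_weyl hv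
  have hvi := R.isRootIsometry_of_mem_weyl hv
  have hβ := (R.isRootIsometry_of_mem_weyl hv').map_mem_roots α (R.pos_subset hα)
  have hkα : k α = k (v' α) := by rw [← hk v hv _ hβ, hr]
  have hvα : ⟪v (x + ρ), coroot α⟫ = ⟪x + ρ, coroot (v' α)⟫ := by
    rw [← hvi.inner_coroot_map_map (x + ρ), hr]
  rw [hvα, hkα, inner_add_left, Set.mem_Ico, not_and_or, not_le, not_lt]
  rcases R.mem_pos_or_neg_mem_pos hβ with hp | hp
  · exact Or.inr (by linarith [R.inner_coroot_nonneg hx hp, hρ _ hp])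
  · left
    have hxβ : ⟪x, coroot (-v' α)⟫ ≠ 0 := fun h0 => R.neg_notMem_pos hα (by
      simpa [hvi.map_neg, hr α] using R.map_mem_pos_of_minimal hv hvx hmin hp h0)
    obtain ⟨m, hm⟩ := hxP _ (R.pos_subset hp)
    have hm1 : (1 : ℝ) ≤ m := by
      have := R.inner_coroot_nonneg hx hp
      rw [hm] at this hxβ
      exact_mod_cast (show (0 : ℤ) < m by exact_mod_cast lt_of_le_of_ne this (Ne.symm hxβ))
    have := hρ _ hp
    rw [coroot_neg, inner_neg_right] at hm this
    rw [hk.apply_neg hβ] at this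
    linarith

lemma le_inner_coroot_simple_of_sink (hk : R.IsWInvariant k) {σ : V → V} (hσ : σ ∈ R.weyl)
    {ν mu : V} (hν : R.IsDominant ν) (hσν : σ ν = mu)
    (hS : ∀ α ∈ R.pos, ⟪mu, coroot α⟫ ∉ Set.Ico (-(k α : ℝ)) (k α)) (i : Fin R.n) :
    (k (R.simple i) : ℝ) ≤ ⟪ν, coroot (R.simple i)⟫ := by
  subst hσν
  have hσi := R.isRootIsometry_of_mem_weyl hσ
  have hγ := hσi.map_mem_roots _ (R.simple_mem_roots i)
  have hkγ := hk σ hσ _ (R.simple_mem_roots i)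
  have := hν i
  by_contra! hlt
  rcases R.mem_pos_or_neg_mem_pos hγ with hp | hp
  · refine hS _ hp ⟨?_, ?_⟩ <;> rw [hσi.inner_coroot_map_map, hkγ] <;> linarith
  · refine hS _ hp ⟨?_, ?_⟩ <;>
      rw [coroot_neg, inner_neg_right, hσi.inner_coroot_map_map, hk.apply_neg hγ, hkγ] <;>
      linarith

lemma map_simple_mem_pos_of_sink (hk : R.IsWInvariant k) {σ : V → V} (hσ : σ ∈ R.weyl)
    {ν mu : V} (hσν : σ ν = mu) (hmin : ∀ w ∈ R.weyl, w ν = mu → R.coxLen σ ≤ R.coxLen w)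
    (hS : ∀ α ∈ R.pos, ⟪mu, coroot α⟫ ∉ Set.Ico (-(k α : ℝ)) (k α)) {i : Fin R.n}
    (hi : ⟪ν, coroot (R.simple i)⟫ = k (R.simple i)) : σ (R.simple i) ∈ R.pos := by
  subst hσν
  rcases Nat.eq_zero_or_pos (k (R.simple i)) with h0 | h0
  · exact R.map_mem_pos_of_minimal hσ rfl hmin (R.simple_mem i) (by simp [hi, h0])
  have hσi := R.isRootIsometry_of_mem_weyl hσ
  have hγ := hσi.map_mem_roots _ (R.simple_mem_roots i)
  refine (R.mem_pos_or_neg_mem_pos hγ).resolve_right fun hp => hS _ hp ?_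
  rw [coroot_neg, inner_neg_right, hσi.inner_coroot_map_map, hk.apply_neg hγ,
    hk σ hσ _ (R.simple_mem_roots i), hi, Set.mem_Ico]
  exact ⟨le_rfl, neg_lt_self (by exact_mod_cast h0)⟩

lemma isDominant_sub_of_sink (hk : R.IsWInvariant k) {ρ : V}
    (hρ : ∀ i, ⟪ρ, coroot (R.simple i)⟫ = k (R.simple i)) {σ : V → V} (hσ : σ ∈ R.weyl)
    {ν mu : V} (hν : R.IsDominant ν) (hσν : σ ν = mu)
    (hmin : ∀ w ∈ R.weyl, w ν = mu → R.coxLen σ ≤ R.coxLen w)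
    (hS : ∀ α ∈ R.pos, ⟪mu, coroot α⟫ ∉ Set.Ico (-(k α : ℝ)) (k α)) :
    R.IsDominant (ν - ρ) ∧ ∀ β ∈ R.pos, ⟪ν - ρ, coroot β⟫ = 0 → σ β ∈ R.pos := by
  have hνρ : ∀ i, ⟪ν - ρ, coroot (R.simple i)⟫ = ⟪ν, coroot (R.simple i)⟫ - k (R.simple i) :=
    fun i => by rw [inner_sub_left, hρ]
  have hx : R.IsDominant (ν - ρ) := fun i => by
    linarith [hνρ i, R.le_inner_coroot_simple_of_sink hk hσ hν hσν hS i]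
  refine ⟨hx, fun β => R.map_mem_pos_of_inner_coroot_eq_zero hx
    (R.isRootIsometry_of_mem_weyl hσ) fun i hi => ?_⟩
  exact R.map_simple_mem_pos_of_sink hk hσ hσν hmin hS (by linarith [hνρ i])

end RootSystemData

lemma inner_sum_smul_coroot_simple (R : RootSystemData V) (fw : Fin R.n → V)
    (hfw : ∀ i j, ⟪fw i, coroot (R.simple j)⟫ = if i = j then (1 : ℝ) else 0)
    (c : Fin R.n → ℝ) (i : Fin R.n) : ⟪∑ j, c j • fw j, coroot (R.simple i)⟫ = c i := by
  simp [sum_inner, real_inner_smul_left, hfw]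

/-- The sinks of truncated interval-firing are exactly the `η_𝐤(λ)` for `λ ∈ P`. -/
theorem statement6 (R : RootSystemData V)
    (fw : Fin R.n → V)
    (hfw : ∀ i j, ⟪fw i, coroot (R.simple j)⟫ = if i = j then (1 : ℝ) else 0)
    (dm : V → V)
    (hdm : ∀ lam ∈ R.weightLattice, dm lam ∈ R.orbit lam ∧ R.IsDominant (dm lam))
    (wl : V → V → V)
    (hwl : ∀ lam ∈ R.weightLattice, wl lam ∈ R.weyl ∧ wl lam (dm lam) = lam ∧
      ∀ w ∈ R.weyl, w (dm lam) = lam → R.coxLen (wl lam) ≤ R.coxLen w)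
    (k : V → ℕ) (hk : R.IsWInvariant k) (mu : V) (hmu : mu ∈ R.weightLattice) :
    (¬ ∃ ν, R.trFire k mu ν) ↔
      ∃ lam ∈ R.weightLattice, mu = etaMap R fw wl k lam := by
  set ρ := ∑ i, (k (R.simple i) : ℝ) • fw i
  have hρ := inner_sum_smul_coroot_simple R fw hfw (fun i => (k (R.simple i) : ℝ))
  have hρP : ρ ∈ R.weightLattice :=
    R.mem_weightLattice_of_inner_coroot_simple fun i => ⟨k (R.simple i), by rw [hρ]; rfl⟩
  have hdmP : ∀ lam ∈ R.weightLattice, dm lam ∈ R.weightLattice :=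
    fun lam hlam => R.mem_weightLattice_of_mem_orbit hlam (hdm lam hlam).1
  have hη : ∀ lam ∈ R.weightLattice, etaMap R fw wl k lam = wl lam (dm lam + ρ) :=
    fun lam hlam => by
      rw [etaMap, (R.isRootIsometry_of_mem_weyl (hwl lam hlam).1).map_add, (hwl lam hlam).2.1]
  rw [R.not_exists_trFire_iff k hmu]
  constructor
  · intro hS
    obtain ⟨hσ, hσν, hσmin⟩ := hwl mu hmu
    obtain ⟨hx, hσpos⟩ := R.isDominant_sub_of_sink hk hρ hσ (hdm mu hmu).2 hσν hσmin hS
    set lam := wl mu (dm mu - ρ)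
    have hlam : lam ∈ R.weightLattice :=
      R.mem_weightLattice_of_mem_weyl hσ (R.sub_mem_weightLattice (hdmP mu hmu) hρP)
    obtain ⟨hv, hvx, hvmin⟩ := hwl lam hlam
    have hdmx : dm lam = dm mu - ρ := R.eq_of_isDominant_of_mem_orbit hx (hdm lam hlam).2
      (R.mem_orbit_trans (hdm lam hlam).1 ⟨wl mu, hσ, rfl⟩)
    rw [hdmx] at hvx hvmin
    have hvσ : wl lam = wl mu := R.eq_of_minimal_of_map_pos hx hv hvx hvmin hσ rfl hσpos
    exact ⟨lam, hlam, by rw [hη lam hlam, hdmx, hvσ, sub_add_cancel, hσν]⟩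
  · rintro ⟨lam, hlam, rfl⟩ α hα
    obtain ⟨hv, hvx, hvmin⟩ := hwl lam hlam
    rw [hη lam hlam]
    exact R.inner_coroot_notMem_Ico (hdm lam hlam).2 (hdmP lam hlam) hk
      (fun β => hk.le_inner_coroot (hρ · |>.ge)) hv hvx hvmin hα
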